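/- Let W, D be n×n real matrices with nonnegative entries and let α, β ≥ 0 satisfy α ≤ 1/(4‖W‖₁) and β ≤ 1/(4‖D‖₁). Then the GRASP operator G maps S = {s ∈ ℝ^n : ‖s − 1‖_∞ ≤ 1} into itself and is a contraction on S (with respect to ‖·‖_∞). Consequently G admits a unique fixed point s* ∈ S, and for every s₀ ∈ S the iteration s_{k+1} = G(s_k) converges to s*. -/

import Mathlib

/-! On `S` every coordinate lies in `[0, 2]`, so for `a = α (Wᵀ s)_i` and `b = β (Dᵀ s)_i` the
bounds `α ‖W‖₁, β ‖D‖₁ ≤ 1/4` give `0 ≤ a` and `|b| ≤ 1/2`; hence `G(s)_i = (1 + b) / (1 + a)`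
lies in `[0, 2]`. As the denominators are at least `1`, two such quotients differ by at most
`|b - b'| + (3/2) |a - a'|`, and both differences are at most `‖x - y‖_∞ / 4`, so `G` is
`5/8`-Lipschitz on `S`. Banach's fixed point theorem on the closed set `S` gives the rest. -/

open Finset

/-- Maximum absolute column sum norm `‖A‖₁ = max_j ∑_i |A_{ij}|`. -/
noncomputable def matNorm1 {n : ℕ} (A : Matrix (Fin n) (Fin n) ℝ) : ℝ :=
  ⨆ j, ∑ i, |A i j|

/-- The GRASP operator `G(s)_i = (1 + β (Dᵀ s)_i) / (1 + α (Wᵀ s)_i)`. -/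
noncomputable def grasp {n : ℕ} (W D : Matrix (Fin n) (Fin n) ℝ) (α β : ℝ)
    (s : Fin n → ℝ) : Fin n → ℝ :=
  fun i => (1 + β * ∑ k, D k i * s k) / (1 + α * ∑ k, W k i * s k)

open Set Filter Topology Metric Function Matrix

theorem LipschitzOnWith.exists_unique_isFixedPt_tendsto_iterate {X : Type*} [MetricSpace X]
    {f : X → X} {s : Set X} {K : NNReal} (hf : LipschitzOnWith K f s) (hK : K < 1)
    (hsc : IsComplete s) (hs : s.Nonempty) (hsf : MapsTo f s s) :
    ∃ y ∈ s, IsFixedPt f y ∧ (∀ z ∈ s, IsFixedPt f z → z = y) ∧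
      ∀ x ∈ s, Tendsto (fun k ↦ f^[k] x) atTop (𝓝 y) := by
  have hcon : ContractingWith K (hsf.restrict f s s) := ⟨hK, hf.mapsToRestrict hsf⟩
  have unique : ∀ y ∈ s, IsFixedPt f y → ∀ z ∈ s, IsFixedPt f z → z = y := fun y hy hfy z hz hfz ↦
    congrArg Subtype.val <| hcon.fixedPoint_unique' (x := ⟨z, hz⟩) (y := ⟨y, hy⟩)
      (Subtype.ext hfz) (Subtype.ext hfy)
  obtain ⟨x₀, hx₀⟩ := hs
  obtain ⟨y, hy, hfy, -⟩ := hcon.exists_fixedPoint' hsc hsf hx₀ (edist_ne_top _ _)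
  refine ⟨y, hy, hfy, unique y hy hfy, fun x hx ↦ ?_⟩
  obtain ⟨y', hy', hfy', hlim, -⟩ := hcon.exists_fixedPoint' hsc hsf hx (edist_ne_top _ _)
  rwa [unique y hy hfy y' hy' hfy'] at hlim

lemma matNorm1_nonneg {n : ℕ} (A : Matrix (Fin n) (Fin n) ℝ) : 0 ≤ matNorm1 A :=
  Real.iSup_nonneg fun _ ↦ sum_nonneg fun _ _ ↦ abs_nonneg _

lemma sum_abs_le_matNorm1 {n : ℕ} (A : Matrix (Fin n) (Fin n) ℝ) (j : Fin n) :
    ∑ i, |A i j| ≤ matNorm1 A :=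
  le_ciSup (f := fun j ↦ ∑ i, |A i j|) (Set.finite_range _).bddAbove j

lemma mul_le_one_div_of_le_one_div_mul {c a N : ℝ} (ha : 0 < a) (hN : 0 ≤ N)
    (h : c ≤ 1 / (a * N)) : c * N ≤ 1 / a := by
  rcases hN.eq_or_lt with rfl | hN
  · rw [mul_zero]; positivity
  · rw [le_div_iff₀ (by positivity)] at h
    rw [le_div_iff₀ ha]
    linarith

lemma norm_transpose_mulVec_le {n : ℕ} (A : Matrix (Fin n) (Fin n) ℝ) (x : Fin n → ℝ) :
    ‖Aᵀ *ᵥ x‖ ≤ matNorm1 A * ‖x‖ := by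
  refine (pi_norm_le_iff_of_nonneg (by positivity [matNorm1_nonneg A])).2 fun i ↦ ?_
  calc ‖(Aᵀ *ᵥ x) i‖ = |∑ k, A k i * x k| := rfl
    _ ≤ ∑ k, |A k i| * ‖x‖ := by
        refine (abs_sum_le_sum_abs _ _).trans (sum_le_sum fun k _ ↦ ?_)
        rw [abs_mul]
        exact mul_le_mul_of_nonneg_left (norm_le_pi_norm x k) (abs_nonneg _)
    _ ≤ matNorm1 A * ‖x‖ := by
        rw [← sum_mul]
        exact mul_le_mul_of_nonneg_right (sum_abs_le_matNorm1 A i) (norm_nonneg x)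

lemma abs_mul_transpose_mulVec_le {n : ℕ} (A : Matrix (Fin n) (Fin n) ℝ) {c : ℝ} (hc : 0 ≤ c)
    (x : Fin n → ℝ) (i : Fin n) : |c * (Aᵀ *ᵥ x) i| ≤ c * matNorm1 A * ‖x‖ := by
  rw [abs_mul, abs_of_nonneg hc, mul_assoc]
  exact mul_le_mul_of_nonneg_left ((norm_le_pi_norm _ i).trans (norm_transpose_mulVec_le A x)) hc

lemma transpose_mulVec_nonneg {n : ℕ} {A : Matrix (Fin n) (Fin n) ℝ} (hA : ∀ i j, 0 ≤ A i j)
    {x : Fin n → ℝ} (hx : 0 ≤ x) (i : Fin n) : 0 ≤ (Aᵀ *ᵥ x) i :=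
  show 0 ≤ ∑ k, A k i * x k from sum_nonneg fun k _ ↦ mul_nonneg (hA k i) (hx k)

lemma nonneg_of_mem_closedBall_one {ι : Type*} [Fintype ι] {x : ι → ℝ}
    (hx : x ∈ closedBall 1 1) : 0 ≤ x := fun k ↦ by
  have h := (norm_le_pi_norm (x - 1) k).trans (mem_closedBall_iff_norm.1 hx)
  rw [Pi.sub_apply, Pi.one_apply, Real.norm_eq_abs, abs_le] at h
  simpa using h.1

lemma norm_le_two_of_mem_closedBall_one {ι : Type*} [Fintype ι] {x : ι → ℝ}
    (hx : x ∈ closedBall 1 1) : ‖x‖ ≤ 2 := by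
  have h1 : ‖(1 : ι → ℝ)‖ ≤ 1 := (pi_norm_const_le (1 : ℝ)).trans_eq norm_one
  linarith [norm_le_of_mem_closedBall hx]

lemma abs_one_add_div_one_add_sub_one_le {a b : ℝ} (ha : 0 ≤ a) (hb : |b| ≤ 1) :
    |(1 + b) / (1 + a) - 1| ≤ 1 := by
  rw [abs_le] at hb ⊢
  have h₀ : 0 ≤ (1 + b) / (1 + a) := div_nonneg (by linarith) (by linarith)
  have h₂ : (1 + b) / (1 + a) ≤ 2 := (div_le_iff₀ (by linarith)).2 (by linarith)
  constructor <;> linarith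

lemma abs_one_add_div_one_add_sub_le {a a' b b' : ℝ} (ha : 0 ≤ a) (ha' : 0 ≤ a') :
    |(1 + b) / (1 + a) - (1 + b') / (1 + a')| ≤ |b - b'| + |1 + b'| * |a - a'| := by
  have hd : 1 ≤ 1 + a := by linarith
  have hd' : 1 ≤ (1 + a) * (1 + a') := by nlinarith
  have key : (1 + b) / (1 + a) - (1 + b') / (1 + a')
      = (b - b') / (1 + a) - (1 + b') * (a - a') / ((1 + a) * (1 + a')) := by
    field_simp
    ring
  rw [key, ← abs_mul]
  refine (abs_sub _ _).trans (add_le_add ?_ ?_) <;> rw [abs_div]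
  · exact div_le_self (abs_nonneg _) (hd.trans (le_abs_self _))
  · exact div_le_self (abs_nonneg _) (hd'.trans (le_abs_self _))

section Grasp

variable {n : ℕ} {W D : Matrix (Fin n) (Fin n) ℝ} {α β : ℝ}

lemma grasp_apply (s : Fin n → ℝ) (i : Fin n) :
    grasp W D α β s i = (1 + β * (Dᵀ *ᵥ s) i) / (1 + α * (Wᵀ *ᵥ s) i) :=
  rfl

lemma abs_mul_transpose_mulVec_le_half (A : Matrix (Fin n) (Fin n) ℝ) {c : ℝ} (hc : 0 ≤ c)
    (hcA : c * matNorm1 A ≤ 1 / 4) {x : Fin n → ℝ} (hx : x ∈ closedBall 1 1) (i : Fin n) :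
    |c * (Aᵀ *ᵥ x) i| ≤ 1 / 2 := by
  nlinarith [abs_mul_transpose_mulVec_le A hc x i, norm_le_two_of_mem_closedBall_one hx,
    norm_nonneg x]

lemma grasp_mapsTo_closedBall_one (hW : ∀ i j, 0 ≤ W i j) (hα : 0 ≤ α) (hβ : 0 ≤ β)
    (hβD : β * matNorm1 D ≤ 1 / 4) :
    MapsTo (grasp W D α β) (closedBall 1 1) (closedBall 1 1) := fun s hs ↦ by
  refine mem_closedBall_iff_norm.2 <| (pi_norm_le_iff_of_nonneg zero_le_one).2 fun i ↦ ?_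
  have hb : |β * (Dᵀ *ᵥ s) i| ≤ 1 :=
    (abs_mul_transpose_mulVec_le_half D hβ hβD hs i).trans (by norm_num)
  rw [Pi.sub_apply, Pi.one_apply, grasp_apply, Real.norm_eq_abs]
  exact abs_one_add_div_one_add_sub_one_le
    (mul_nonneg hα (transpose_mulVec_nonneg hW (nonneg_of_mem_closedBall_one hs) i)) hb

lemma norm_grasp_sub_grasp_le (hW : ∀ i j, 0 ≤ W i j) (hα : 0 ≤ α) (hβ : 0 ≤ β)
    (hαW : α * matNorm1 W ≤ 1 / 4) (hβD : β * matNorm1 D ≤ 1 / 4) {x y : Fin n → ℝ}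
    (hx : x ∈ closedBall 1 1) (hy : y ∈ closedBall 1 1) :
    ‖grasp W D α β x - grasp W D α β y‖ ≤ 5 / 8 * ‖x - y‖ := by
  refine (pi_norm_le_iff_of_nonneg (by positivity)).2 fun i ↦ ?_
  have hsub : ∀ {c : ℝ} (A : Matrix (Fin n) (Fin n) ℝ), 0 ≤ c → c * matNorm1 A ≤ 1 / 4 →
      |c * (Aᵀ *ᵥ x) i - c * (Aᵀ *ᵥ y) i| ≤ 1 / 4 * ‖x - y‖ := fun A hc hcA ↦ by
    rw [← mul_sub, ← Pi.sub_apply, ← mulVec_sub]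
    exact (abs_mul_transpose_mulVec_le A hc (x - y) i).trans
      (mul_le_mul_of_nonneg_right hcA (norm_nonneg _))
  have hb : |1 + β * (Dᵀ *ᵥ y) i| ≤ 3 / 2 := by
    linarith [abs_add_le 1 (β * (Dᵀ *ᵥ y) i), abs_one (α := ℝ),
      abs_mul_transpose_mulVec_le_half D hβ hβD hy i]
  have hnonneg := fun {z} (hz : z ∈ closedBall (1 : Fin n → ℝ) 1) ↦
    mul_nonneg hα (transpose_mulVec_nonneg hW (nonneg_of_mem_closedBall_one hz) i)
  rw [Pi.sub_apply, grasp_apply, grasp_apply, Real.norm_eq_abs]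
  refine (abs_one_add_div_one_add_sub_le (hnonneg hx) (hnonneg hy)).trans ?_
  nlinarith [hsub D hβ hβD, hsub W hα hαW, abs_nonneg (α * (Wᵀ *ᵥ x) i - α * (Wᵀ *ᵥ y) i)]

end Grasp

theorem grasp_convergence_general {n : ℕ} (W D : Matrix (Fin n) (Fin n) ℝ)
    (hW : ∀ i j, 0 ≤ W i j)
    (α β : ℝ) (hα : 0 ≤ α) (hβ : 0 ≤ β)
    (hα' : α ≤ 1 / (4 * matNorm1 W)) (hβ' : β ≤ 1 / (4 * matNorm1 D)) :
    (∀ s : Fin n → ℝ, ‖s - 1‖ ≤ 1 → ‖grasp W D α β s - 1‖ ≤ 1) ∧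
    (∃ ℓ : ℝ, 0 ≤ ℓ ∧ ℓ < 1 ∧ ∀ x y : Fin n → ℝ, ‖x - 1‖ ≤ 1 → ‖y - 1‖ ≤ 1 →
      ‖grasp W D α β x - grasp W D α β y‖ ≤ ℓ * ‖x - y‖) ∧
    ∃ s : Fin n → ℝ, ‖s - 1‖ ≤ 1 ∧ grasp W D α β s = s ∧
      (∀ s' : Fin n → ℝ, ‖s' - 1‖ ≤ 1 → grasp W D α β s' = s' → s' = s) ∧
      ∀ s₀ : Fin n → ℝ, ‖s₀ - 1‖ ≤ 1 →
        Filter.Tendsto (fun k => (grasp W D α β)^[k] s₀) Filter.atTop (nhds s) := by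
  have hαW := mul_le_one_div_of_le_one_div_mul four_pos (matNorm1_nonneg W) hα'
  have hβD := mul_le_one_div_of_le_one_div_mul four_pos (matNorm1_nonneg D) hβ'
  have hmaps := grasp_mapsTo_closedBall_one hW hα hβ hβD
  have hcontr : ∀ x ∈ closedBall (1 : Fin n → ℝ) 1, ∀ y ∈ closedBall 1 1,
      ‖grasp W D α β x - grasp W D α β y‖ ≤ 5 / 8 * ‖x - y‖ := fun x hx y hy ↦
    norm_grasp_sub_grasp_le hW hα hβ hαW hβD hx hy
  have hlip : LipschitzOnWith (5 / 8) (grasp W D α β) (closedBall 1 1) :=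
    .of_dist_le_mul fun x hx y hy ↦ by
      simpa only [dist_eq_norm, NNReal.coe_div, NNReal.coe_ofNat] using hcontr x hx y hy
  obtain ⟨s, hs, hfix, hunique, hlim⟩ := hlip.exists_unique_isFixedPt_tendsto_iterate
    (by norm_num) isClosed_closedBall.isComplete (nonempty_closedBall.2 zero_le_one) hmaps
  simp only [mem_closedBall_iff_norm] at hmaps hcontr hs hunique hlim
  exact ⟨fun s hs ↦ hmaps hs, ⟨5 / 8, by norm_num, by norm_num, fun x y hx hy ↦ hcontr x hx y hy⟩,
    s, hs, hfix, hunique, hlim⟩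

/-- GRASP convergence theorem: for nonnegative `W, D` with `α ≤ 1/(4‖W‖₁)` and
`β ≤ 1/(4‖D‖₁)`, the GRASP operator maps `S = {s : ‖s - 1‖_∞ ≤ 1}` into itself, is a
contraction on `S`, admits a unique fixed point `s* ∈ S`, and the iteration
`s_{k+1} = G(s_k)` converges to `s*` from any `s₀ ∈ S`. -/
theorem grasp_convergence {n : ℕ} (W D : Matrix (Fin n) (Fin n) ℝ)
    (hW : ∀ i j, 0 ≤ W i j) (hD : ∀ i j, 0 ≤ D i j)
    (α β : ℝ) (hα : 0 ≤ α) (hβ : 0 ≤ β)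
    (hα' : α ≤ 1 / (4 * matNorm1 W)) (hβ' : β ≤ 1 / (4 * matNorm1 D)) :
    (∀ s : Fin n → ℝ, ‖s - 1‖ ≤ 1 → ‖grasp W D α β s - 1‖ ≤ 1) ∧
    (∃ ℓ : ℝ, 0 ≤ ℓ ∧ ℓ < 1 ∧ ∀ x y : Fin n → ℝ, ‖x - 1‖ ≤ 1 → ‖y - 1‖ ≤ 1 →
      ‖grasp W D α β x - grasp W D α β y‖ ≤ ℓ * ‖x - y‖) ∧
    ∃ s : Fin n → ℝ, ‖s - 1‖ ≤ 1 ∧ grasp W D α β s = s ∧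
      (∀ s' : Fin n → ℝ, ‖s' - 1‖ ≤ 1 → grasp W D α β s' = s' → s' = s) ∧
      ∀ s₀ : Fin n → ℝ, ‖s₀ - 1‖ ≤ 1 →
        Filter.Tendsto (fun k => (grasp W D α β)^[k] s₀) Filter.atTop (nhds s) :=
  grasp_convergence_general W D hW α β hα hβ hα' hβ'
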